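/- arXiv:2109.06414 — 10 statements merged into one kernel-verified Lean document; each statement's English description precedes it below -/
import Mathlib

section
/- Let X be a perfectly normal topological space and let f : X → ℝ be a function that is continuous on the complement of some finite set F ⊆ X. Then for every open set U ⊆ ℝ, the preimage f⁻¹(U) is an Fσ-set in X. -/
/-- A set is an Fσ-set if it is a countable union of closed sets. -/
def IsFsigma {X : Type*} [TopologicalSpace X] (s : Set X) : Prop :=
  ∃ c : ℕ → Set X, (∀ n, IsClosed (c n)) ∧ s = ⋃ n, c n

/-- Open sets are Fσ when every closed set is Gδ. -/
lemma isFsigma_of_isOpen {X : Type*} [TopologicalSpace X]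
    (hperf : ∀ C : Set X, IsClosed C → IsGδ C) {O : Set X} (hO : IsOpen O) :
    IsFsigma O := by
  obtain ⟨T, hTopen, hTc, hEq⟩ := hperf Oᶜ hO.isClosed_compl
  have hTc' : (insert Set.univ T).Countable := hTc.insert _
  obtain ⟨g, hg⟩ := hTc'.exists_eq_range (Set.insert_nonempty _ _)
  refine ⟨fun n => (g n)ᶜ, fun n => ?_, ?_⟩
  · have : g n ∈ insert Set.univ T := by rw [hg]; exact Set.mem_range_self n
    rcases this with h | h
    · simp [h]
    · exact (hTopen _ h).isClosed_compl
  · have : Oᶜ = ⋂ n, g n := by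
      rw [hEq]
      ext x
      simp only [Set.mem_sInter, Set.mem_iInter]
      constructor
      · intro hx n
        have : g n ∈ insert Set.univ T := by rw [hg]; exact Set.mem_range_self n
        rcases this with h | h
        · simp [h]
        · exact hx _ h
      · intro hx t ht
        have : t ∈ insert Set.univ T := Set.mem_insert_of_mem _ ht
        rw [hg] at this
        obtain ⟨n, rfl⟩ := this
        exact hx n
    calc O = (Oᶜ)ᶜ := (compl_compl O).symm
    _ = (⋂ n, g n)ᶜ := by rw [this]
    _ = ⋃ n, (g n)ᶜ := by simp [Set.compl_iInter]

/-- In a perfectly normal space (normal + every closed set is Gδ), if `f : X → ℝ`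
is continuous outside a finite set, then preimages of open sets are Fσ. -/
theorem stmt0 {X : Type*} [TopologicalSpace X] [T1Space X] [NormalSpace X]
    (hperf : ∀ C : Set X, IsClosed C → IsGδ C)
    (f : X → ℝ) (F : Set X) (hF : F.Finite) (hf : ContinuousOn f Fᶜ) :
    ∀ U : Set ℝ, IsOpen U → IsFsigma (f ⁻¹' U) := by
  intro U hU
  have hFc : IsOpen Fᶜ := hF.isClosed.isOpen_compl
  have hOpen : IsOpen (Fᶜ ∩ f ⁻¹' U) := hf.isOpen_inter_preimage hFc hU
  obtain ⟨c, hc, hEq⟩ := isFsigma_of_isOpen hperf hOpen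
  have hFin : (F ∩ f ⁻¹' U).Finite := hF.inter_of_left _
  refine ⟨fun n => c n ∪ (F ∩ f ⁻¹' U), fun n => (hc n).union hFin.isClosed, ?_⟩
  rw [Set.iUnion_union_distrib]
  simp only [Set.iUnion_const, ← hEq]
  rw [← Set.union_inter_distrib_right]
  simp
end

section
/- Let X be a T1 topological space whose set of non-isolated points is infinite. Then there exists a sequence of functions fₙ : X → ℝ, each continuous outside a finite subset of X, converging uniformly to a function f : X → ℝ whose set of points of discontinuity is infinite (so f is not continuous outside any finite set). -/
/-- `f` belongs to `C(X)_F` : it is continuous outside some finite set. -/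
def CF (X : Type*) [TopologicalSpace X] (f : X → ℝ) : Prop :=
  ∃ F : Set X, F.Finite ∧ ContinuousOn f Fᶜ

lemma pow_half_gap {j k : ℕ} (hjk : j ≠ k) :
    ((2:ℝ)⁻¹) ^ (k+1) ≤ |((2:ℝ)⁻¹) ^ j - (2:ℝ)⁻¹ ^ k| := by
  have ha : (0:ℝ) < 2⁻¹ := by norm_num
  rcases lt_or_gt_of_ne hjk with hlt | hgt
  · obtain ⟨d, rfl⟩ : ∃ d, k = j + d + 1 := ⟨k - j - 1, by omega⟩
    have h1 : ((2:ℝ)⁻¹) ^ (j + d + 1) ≤ (2:ℝ)⁻¹ ^ j * 2⁻¹ := by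
      have := mul_le_mul_of_nonneg_left
        (pow_le_pow_of_le_one (by norm_num : (0:ℝ) ≤ 2⁻¹) (by norm_num)
          (show 1 ≤ d + 1 by omega)) (le_of_lt (pow_pos ha j))
      calc ((2:ℝ)⁻¹) ^ (j + d + 1) = (2:ℝ)⁻¹ ^ j * (2:ℝ)⁻¹ ^ (d+1) := by ring
        _ ≤ (2:ℝ)⁻¹ ^ j * (2:ℝ)⁻¹ ^ 1 := this
        _ = (2:ℝ)⁻¹ ^ j * 2⁻¹ := by ring
    have h2 : (0:ℝ) < (2:ℝ)⁻¹ ^ j := by positivity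
    have h3 : ((2:ℝ)⁻¹) ^ (j + d + 1 + 1) ≤ (2:ℝ)⁻¹ ^ j * 2⁻¹ * 2⁻¹ := by
      rw [pow_succ]; gcongr
    rw [abs_of_nonneg (by nlinarith)]
    nlinarith
  · obtain ⟨d, rfl⟩ : ∃ d, j = k + d + 1 := ⟨j - k - 1, by omega⟩
    have h1 : ((2:ℝ)⁻¹) ^ (k + d + 1) ≤ (2:ℝ)⁻¹ ^ (k+1) := by
      apply pow_le_pow_of_le_one (by norm_num) (by norm_num); omega
    have h2 : ((2:ℝ)⁻¹) ^ (k+1) = (2:ℝ)⁻¹ ^ k * 2⁻¹ := pow_succ _ _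
    have h3 : (0:ℝ) < (2:ℝ)⁻¹ ^ k := by positivity
    rw [abs_of_nonpos (by nlinarith)]
    nlinarith

/-- If a T1 space has infinitely many non-isolated points, then there is a sequence in
`C(X)_F` converging uniformly to a function with infinitely many points of discontinuity. -/
theorem stmt1 {X : Type*} [TopologicalSpace X] [T1Space X]
    (h : {x : X | ¬ IsOpen ({x} : Set X)}.Infinite) :
    ∃ (f : ℕ → X → ℝ) (g : X → ℝ),
      (∀ n, CF X (f n)) ∧
      TendstoUniformly f g Filter.atTop ∧
      {x : X | ¬ ContinuousAt g x}.Infinite := by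
  classical
  set S := {x : X | ¬ IsOpen ({x} : Set X)} with hS
  let e := h.natEmbedding
  let p : ℕ → X := fun k => (e k : X)
  have hpinj : Function.Injective p :=
    Subtype.val_injective.comp e.injective
  have hpS : ∀ k, ¬ IsOpen ({p k} : Set X) := fun k => (e k).2
  set g : X → ℝ := Function.extend p (fun k => (2:ℝ)⁻¹ ^ k) (fun _ => 0) with hg
  have hgp : ∀ k, g (p k) = (2:ℝ)⁻¹ ^ k := fun k => hpinj.extend_apply _ _ k
  have hgout : ∀ x, x ∉ Set.range p → g x = 0 := fun x hx =>
    Function.extend_apply' _ _ _ (by simpa using hx)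
  set f : ℕ → X → ℝ := fun n =>
    Function.extend p (fun k => if k < n then (2:ℝ)⁻¹ ^ k else 0) (fun _ => 0) with hf
  have hfp : ∀ n k, f n (p k) = if k < n then (2:ℝ)⁻¹ ^ k else 0 :=
    fun n k => hpinj.extend_apply _ _ k
  have hfout : ∀ n x, x ∉ Set.range p → f n x = 0 := fun n x hx =>
    Function.extend_apply' _ _ _ (by simpa using hx)
  refine ⟨f, g, ?_, ?_, ?_⟩
  · -- each f n is in CF
    intro n
    refine ⟨p '' Set.Iio n, (Set.finite_Iio n).image p, ?_⟩
    have hz : Set.EqOn (f n) (fun _ => 0) (p '' Set.Iio n)ᶜ := by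
      intro x hx
      by_cases hr : x ∈ Set.range p
      · obtain ⟨k, rfl⟩ := hr
        have hk : ¬ k < n := fun hk => hx ⟨k, hk, rfl⟩
        simp [hfp n k, hk]
      · exact hfout n x hr
    exact continuousOn_const.congr hz
  · -- uniform convergence
    rw [Metric.tendstoUniformly_iff]
    intro ε hε
    obtain ⟨N, hN⟩ := exists_pow_lt_of_lt_one hε (show (2:ℝ)⁻¹ < 1 by norm_num)
    refine Filter.eventually_atTop.2 ⟨N, fun n hn x => ?_⟩
    have hbound : dist (g x) (f n x) ≤ (2:ℝ)⁻¹ ^ n := by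
      by_cases hr : x ∈ Set.range p
      · obtain ⟨k, rfl⟩ := hr
        rw [hgp, hfp]
        by_cases hk : k < n
        · simp [hk]
        · simp only [hk, if_false, Real.dist_eq, sub_zero,
            abs_of_nonneg (by positivity : (0:ℝ) ≤ (2:ℝ)⁻¹ ^ k)]
          exact pow_le_pow_of_le_one (by norm_num) (by norm_num) (by omega)
      · rw [hgout x hr, hfout n x hr]; simp [dist_self]
    calc dist (g x) (f n x) ≤ (2:ℝ)⁻¹ ^ n := hbound
      _ ≤ (2:ℝ)⁻¹ ^ N := pow_le_pow_of_le_one (by norm_num) (by norm_num) hn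
      _ < ε := hN
  · -- infinitely many discontinuities
    have hdisc : ∀ k, ¬ ContinuousAt g (p k) := by
      intro k hc
      apply hpS k
      have hmem : {y : X | dist (g y) (g (p k)) < (2:ℝ)⁻¹ ^ (k+1)} ∈ nhds (p k) := by
        exact hc (Metric.ball_mem_nhds _ (by positivity))
      have hsub : {y : X | dist (g y) (g (p k)) < (2:ℝ)⁻¹ ^ (k+1)} ⊆ {p k} := by
        intro y hy
        by_contra hne
        have hne' : y ≠ p k := hne
        have hlb : (2:ℝ)⁻¹ ^ (k+1) ≤ dist (g y) (g (p k)) := by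
          rw [hgp, Real.dist_eq]
          by_cases hr : y ∈ Set.range p
          · obtain ⟨j, rfl⟩ := hr
            have hjk : j ≠ k := fun hjk => hne' (by rw [hjk])
            rw [hgp]
            exact pow_half_gap hjk
          · rw [hgout y hr]
            rw [zero_sub, abs_neg, abs_of_nonneg (by positivity)]
            exact pow_le_pow_of_le_one (by norm_num) (by norm_num) (by omega)
        exact absurd hy (not_lt.2 hlb)
      obtain ⟨U, hU1, hU2, hU3⟩ := mem_nhds_iff.1 hmem
      have : U = {p k} := le_antisymm (hU1.trans hsub) (Set.singleton_subset_iff.2 hU3)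
      rwa [this] at hU2
    apply Set.Infinite.mono (s := Set.range p)
    · rintro _ ⟨k, rfl⟩; exact hdisc k
    · exact Set.infinite_range_of_injective hpinj
end

section
/- A T1 topological space X has only finitely many non-isolated points if and only if every uniformly convergent sequence of functions in C(X)_F has its limit in C(X)_F. -/
open Topology Filter


lemma gapl {j k : ℕ} (h : j ≠ k) :
    ((1:ℝ)/2)^(k+1) ≤ |(1/2:ℝ)^j - (1/2:ℝ)^k| := by
  have h0 : (0:ℝ) ≤ 1/2 := by norm_num
  have h1 : (1/2:ℝ) ≤ 1 := by norm_num
  have pj : (0:ℝ) ≤ (1/2:ℝ)^j := pow_nonneg h0 _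
  have pk : (0:ℝ) ≤ (1/2:ℝ)^k := pow_nonneg h0 _
  rcases lt_or_gt_of_ne h with hjk | hjk
  · have hk : (1/2:ℝ)^k ≤ (1/2:ℝ)^(j+1) := pow_le_pow_of_le_one h0 h1 hjk
    have hk' : (1/2:ℝ)^(k+1) ≤ (1/2:ℝ)^(j+1) := pow_le_pow_of_le_one h0 h1 (by omega)
    have he : (1/2:ℝ)^j = 2 * (1/2:ℝ)^(j+1) := by ring
    rw [abs_of_nonneg (by linarith)]
    linarith
  · have hk : (1/2:ℝ)^j ≤ (1/2:ℝ)^(k+1) := pow_le_pow_of_le_one h0 h1 hjk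
    have he : (1/2:ℝ)^k = 2 * (1/2:ℝ)^(k+1) := by ring
    rw [abs_of_nonpos (by linarith)]
    linarith

/-- A T1 space has finitely many non-isolated points iff `C(X)_F` is closed
under uniform limits. -/
theorem stmt3 {X : Type*} [TopologicalSpace X] [T1Space X] :
    {x : X | ¬ IsOpen ({x} : Set X)}.Finite ↔
      ∀ (f : ℕ → X → ℝ) (g : X → ℝ),
        (∀ n, CF X (f n)) → TendstoUniformly f g Filter.atTop → CF X g := by
  constructor
  · intro hfin f g _ _
    refine ⟨_, hfin, fun y hy => ?_⟩
    simp only [Set.mem_compl_iff, Set.mem_setOf_eq, not_not] at hy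
    have h1 : 𝓝 y = pure y := (isOpen_singleton_iff_nhds_eq_pure y).mp hy
    have : ContinuousAt g y := by
      rw [ContinuousAt, h1]; exact tendsto_pure_nhds g y
    exact this.continuousWithinAt
  · intro H
    by_contra hinf
    have hinf' : Set.Infinite {x : X | ¬ IsOpen ({x} : Set X)} := hinf
    obtain e := hinf'.natEmbedding
    set x : ℕ → X := fun k => (e k).1 with hxdef
    have hxinj : Function.Injective x := fun a b h => e.injective (Subtype.ext h)
    have hxni : ∀ k, ¬ IsOpen ({x k} : Set X) := fun k => (e k).2
    set g : X → ℝ := Function.extend x (fun k => (1/2:ℝ)^k) 0 with hg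
    set f : ℕ → X → ℝ := fun n =>
      Function.extend x (fun k => if k < n then (1/2:ℝ)^k else 0) 0 with hf
    have hgx : ∀ k, g (x k) = (1/2:ℝ)^k := fun k => hxinj.extend_apply _ _ k
    have hgy : ∀ y, (¬ ∃ k, x k = y) → g y = 0 := fun y hy =>
      Function.extend_apply' _ _ _ hy
    have hfx : ∀ n k, f n (x k) = if k < n then (1/2:ℝ)^k else 0 := fun n k =>
      hxinj.extend_apply _ _ k
    have hfy : ∀ n y, (¬ ∃ k, x k = y) → f n y = 0 := fun n y hy =>
      Function.extend_apply' _ _ _ hy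
    -- each f n is in CF
    have hCFf : ∀ n, CF X (f n) := by
      intro n
      refine ⟨x '' Set.Iio n, (Set.finite_Iio n).image x, ?_⟩
      refine (continuousOn_const (c := (0:ℝ))).congr ?_
      intro y hy
      by_cases hyr : ∃ k, x k = y
      · obtain ⟨k, rfl⟩ := hyr
        have hkn : ¬ k < n := fun hkn => hy ⟨k, hkn, rfl⟩
        rw [hfx n k, if_neg hkn]
      · exact hfy n y hyr
    -- uniform convergence
    have hunif : TendstoUniformly f g Filter.atTop := by
      rw [Metric.tendstoUniformly_iff]
      intro ε hε
      obtain ⟨N, hN⟩ := exists_pow_lt_of_lt_one hε (by norm_num : (1/2:ℝ) < 1)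
      rw [Filter.eventually_atTop]
      refine ⟨N, fun n hn y => ?_⟩
      by_cases hyr : ∃ k, x k = y
      · obtain ⟨k, rfl⟩ := hyr
        rw [hgx k, hfx n k]
        by_cases hkn : k < n
        · simpa [hkn] using hε
        · rw [if_neg hkn, Real.dist_eq, sub_zero, abs_of_nonneg (by positivity)]
          calc (1/2:ℝ)^k ≤ (1/2:ℝ)^N :=
                pow_le_pow_of_le_one (by norm_num) (by norm_num) (by omega)
            _ < ε := hN
      · rw [hgy y hyr, hfy n y hyr]
        simpa using hε
    obtain ⟨F, hF, hc⟩ := H f g hCFf hunif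
    obtain ⟨y, hyr, hyF⟩ := ((Set.infinite_range_of_injective hxinj).diff hF).nonempty
    obtain ⟨k, rfl⟩ := hyr
    have hopen : IsOpen (Fᶜ) := hF.isClosed.isOpen_compl
    have hca : ContinuousAt g (x k) :=
      (hc _ hyF).continuousAt (hopen.mem_nhds hyF)
    have hb : g ⁻¹' Metric.ball (g (x k)) ((1/2:ℝ)^(k+1)) ∈ 𝓝 (x k) :=
      hca (Metric.ball_mem_nhds _ (by positivity))
    obtain ⟨U, hUsub, hUopen, hxU⟩ := mem_nhds_iff.mp hb
    -- U contains a point other than x k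
    obtain ⟨z, hzU, hzne⟩ : ∃ z ∈ U, z ≠ x k := by
      by_contra hcon
      push_neg at hcon
      have : U = {x k} := Set.Subset.antisymm (fun z hz => hcon z hz)
        (by simpa using hxU)
      exact hxni k (this ▸ hUopen)
    have hdist : |g z - g (x k)| < (1/2:ℝ)^(k+1) := by
      have := hUsub hzU
      simpa [Metric.mem_ball, Real.dist_eq] using this
    have hgap : (1/2:ℝ)^(k+1) ≤ |g z - g (x k)| := by
      rw [hgx k]
      by_cases hzr : ∃ j, x j = z
      · obtain ⟨j, rfl⟩ := hzr
        rw [hgx j]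
        exact gapl (fun h => hzne (by rw [h]))
      · rw [hgy z hzr]
        rw [zero_sub, abs_neg, abs_of_nonneg (by positivity)]
        exact pow_le_pow_of_le_one (by norm_num) (by norm_num) (by omega)
    linarith
end

section
/- Let X be a Baire space that is also a P-space (every Gδ-set is open), and let fₙ : X → ℝ be a sequence of functions, each continuous on some dense open subset of X, converging uniformly to f : X → ℝ. Then f is continuous on some dense open subset of X. -/
/-- In a Baire P-space, a uniform limit of functions each continuous on a dense open
set is itself continuous on a dense open set. -/
theorem stmt4 {X : Type*} [TopologicalSpace X] [BaireSpace X]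
    (hP : ∀ s : Set X, IsGδ s → IsOpen s)
    (f : ℕ → X → ℝ) (g : X → ℝ)
    (hf : ∀ n, ∃ D : Set X, IsOpen D ∧ Dense D ∧ ContinuousOn (f n) D)
    (hconv : TendstoUniformly f g Filter.atTop) :
    ∃ D : Set X, IsOpen D ∧ Dense D ∧ ContinuousOn g D := by
  choose D hDo hDd hDc using hf
  refine ⟨⋂ n, D n, hP _ (IsGδ.iInter_of_isOpen fun n => hDo n), ?_, ?_⟩
  · exact dense_iInter_of_isOpen hDo hDd
  · exact (hconv.tendstoUniformlyOn (s := ⋂ n, D n)).continuousOn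
      (Filter.Frequently.of_forall fun n =>
        (hDc n).mono (Set.iInter_subset _ n))
end

section
/- Let X be a Baire space and a P-space. Then T'(X) = C(X)_F if and only if the set of non-isolated points of X is finite. -/
/-- `f` belongs to `T'(X)` : it is continuous on some dense open set. -/
def Tdash (X : Type*) [TopologicalSpace X] (f : X → ℝ) : Prop :=
  ∃ D : Set X, IsOpen D ∧ Dense D ∧ ContinuousOn f D

lemma countable_isClosed {X : Type*} [TopologicalSpace X] [T1Space X]
    (hP : ∀ s : Set X, IsGδ s → IsOpen s) {s : Set X} (hs : s.Countable) :
    IsClosed s := by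
  rw [← isOpen_compl_iff]
  exact hP _ hs.isGδ_compl

lemma mem_nhds_countable {X : Type*} [TopologicalSpace X] [T1Space X]
    (hP : ∀ s : Set X, IsGδ s → IsOpen s) {s : Set X} (hs : s.Countable)
    {x : X} (hx : ¬ IsOpen ({x} : Set X)) (hmem : s ∈ nhds x) : False := by
  obtain ⟨U, hUs, hU, hxU⟩ := mem_nhds_iff.mp hmem
  apply hx
  have hcl : IsClosed (s \ {x}) := countable_isClosed hP (hs.mono Set.diff_subset)
  have hop : IsOpen (U ∩ (s \ {x})ᶜ) := hU.inter hcl.isOpen_compl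
  have : U ∩ (s \ {x})ᶜ = {x} := by
    ext y
    constructor
    · rintro ⟨hyU, hyc⟩
      by_contra hne
      exact hyc ⟨hUs hyU, by simpa using hne⟩
    · intro hy
      rw [Set.mem_singleton_iff] at hy
      subst hy
      exact ⟨hxU, by simp⟩
  rwa [this] at hop

lemma dense_compl_nonisolated {X : Type*} [TopologicalSpace X] [T1Space X]
    (hP : ∀ s : Set X, IsGδ s → IsOpen s) {s : Set X} (hs : s.Countable)
    (hsub : ∀ x ∈ s, ¬ IsOpen ({x} : Set X)) : Dense sᶜ := by
  rw [← interior_eq_empty_iff_dense_compl]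
  rw [Set.eq_empty_iff_forall_notMem]
  intro x hx
  have hmem : s ∈ nhds x := mem_interior_iff_mem_nhds.mp hx
  exact mem_nhds_countable hP hs (hsub x (interior_subset hx)) hmem

lemma isolated_continuousAt {X : Type*} [TopologicalSpace X] {x : X}
    (hx : IsOpen ({x} : Set X)) (f : X → ℝ) : ContinuousAt f x := by
  rw [ContinuousAt, (isOpen_singleton_iff_nhds_eq_pure x).mp hx]
  exact tendsto_pure_nhds f x

/-- For a Baire P-space, `T'(X) = C(X)_F` iff `X` has finitely many non-isolated points. -/
theorem stmt5 {X : Type*} [TopologicalSpace X] [T1Space X] [BaireSpace X]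
    (hP : ∀ s : Set X, IsGδ s → IsOpen s) :
    (∀ f : X → ℝ, Tdash X f ↔ CF X f) ↔
      {x : X | ¬ IsOpen ({x} : Set X)}.Finite := by
  set N := {x : X | ¬ IsOpen ({x} : Set X)} with hNdef
  constructor
  · intro h
    by_contra hinf
    have hinf : N.Infinite := hinf
    -- extract a countably infinite subset of N
    let e : ℕ ↪ N := hinf.natEmbedding
    set A : Set X := Set.range (fun n => (e n : X)) with hAdef
    have hAsub : A ⊆ N := by rintro _ ⟨n, rfl⟩; exact (e n).2
    have hAc : A.Countable := Set.countable_range _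
    have hAinf : A.Infinite := by
      apply Set.infinite_range_of_injective
      intro a b hab
      exact e.injective (Subtype.val_injective hab)
    set f : X → ℝ := A.indicator (fun _ => (1 : ℝ)) with hfdef
    have hT : Tdash X f := by
      refine ⟨Aᶜ, (countable_isClosed hP hAc).isOpen_compl,
        dense_compl_nonisolated hP hAc (fun x hx => hAsub hx), ?_⟩
      apply ContinuousOn.congr (continuousOn_const (c := (0:ℝ)))
      intro x hx
      exact Set.indicator_of_notMem hx _
    obtain ⟨F, hF, hc⟩ := (h f).mp hT
    obtain ⟨x, hxA, hxF⟩ := (hAinf.diff hF).nonempty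
    have hca : ContinuousAt f x :=
      hc.continuousAt (hF.isClosed.isOpen_compl.mem_nhds hxF)
    have hfx : f x = 1 := by simp [hfdef, Set.indicator_apply, hxA]
    have hpre : f ⁻¹' (Set.Ioi (1/2 : ℝ)) ∈ nhds x := by
      apply hca.preimage_mem_nhds
      rw [hfx]
      exact Ioi_mem_nhds (by norm_num)
    have hAeq : f ⁻¹' (Set.Ioi (1/2 : ℝ)) = A := by
      ext y
      simp only [Set.mem_preimage, Set.mem_Ioi, hfdef]
      by_cases hy : y ∈ A <;> simp [hy]; norm_num
    rw [hAeq] at hpre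
    exact mem_nhds_countable hP hAc (hAsub hxA) hpre
  · intro hN f
    constructor
    · rintro ⟨D, hD, hDd, hc⟩
      refine ⟨N \ D, hN.subset Set.diff_subset, ?_⟩
      intro x hx
      simp only [Set.mem_compl_iff, Set.mem_diff, not_and, not_not] at hx
      by_cases hxD : x ∈ D
      · exact (hc.continuousAt (hD.mem_nhds hxD)).continuousWithinAt
      · have hiso : IsOpen ({x} : Set X) := by
          by_contra hxo
          exact hxD (hx hxo)
        exact (isolated_continuousAt hiso f).continuousWithinAt
    · rintro ⟨F, hF, hc⟩
      refine ⟨(F ∩ N)ᶜ, (countable_isClosed hP (hF.inter_of_left N).countable).isOpen_compl,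
        dense_compl_nonisolated hP (hF.inter_of_left N).countable (fun x hx => hx.2), ?_⟩
      intro x hx
      simp only [Set.mem_compl_iff, Set.mem_inter_iff, not_and] at hx
      by_cases hxF : x ∈ F
      · have hiso : IsOpen ({x} : Set X) := not_not.mp (hx hxF)
        exact (isolated_continuousAt hiso f).continuousWithinAt
      · exact (hc.continuousAt (hF.isClosed.isOpen_compl.mem_nhds hxF)).continuousWithinAt
end

section
/- There exists a non-discrete topological space that is both a Baire space and a P-space. Specifically, ℝ with the topology in which U is open iff 0 ∉ U, or 0 ∈ U and ℝ \ U is countable, is a non-discrete Baire P-space. -/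
/-- The topology on ℝ in which `U` is open iff `0 ∉ U`, or `0 ∈ U` and `ℝ \ U` is countable. -/
def tau : TopologicalSpace ℝ where
  IsOpen U := (0 : ℝ) ∉ U ∨ Uᶜ.Countable
  isOpen_univ := Or.inr (by simp)
  isOpen_inter := by
    rintro s t (hs | hs) ht
    · exact Or.inl fun h => hs h.1
    · rcases ht with ht | ht
      · exact Or.inl fun h => ht h.2
      · exact Or.inr (by rw [Set.compl_inter]; exact hs.union ht)
  isOpen_sUnion := by
    intro S hS
    by_cases h : ∃ U ∈ S, (0 : ℝ) ∈ U
    · obtain ⟨U, hUS, hU0⟩ := h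
      rcases hS U hUS with h0 | hc
      · exact absurd hU0 h0
      · refine Or.inr (hc.mono ?_)
        intro x hx
        simp only [Set.mem_compl_iff, Set.mem_sUnion] at hx ⊢
        exact fun hxU => hx ⟨U, hUS, hxU⟩
    · push_neg at h
      exact Or.inl (by simpa using h)

lemma tau_isOpen {U : Set ℝ} : @IsOpen ℝ tau U ↔ ((0:ℝ) ∉ U ∨ Uᶜ.Countable) := Iff.rfl

lemma tau_zero_compl_subset {U : Set ℝ} (h : @IsOpen ℝ tau U) (hd : @Dense ℝ tau U) :
    ({(0:ℝ)}ᶜ : Set ℝ) ⊆ U := by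
  intro x hx
  have hxo : @IsOpen ℝ tau {x} := Or.inl (by simpa using Ne.symm hx)
  have := (@dense_iff_inter_open ℝ tau U).mp hd {x} hxo ⟨x, rfl⟩
  obtain ⟨y, hy1, hy2⟩ := this
  rcases hy1 with rfl
  exact hy2

lemma tau_dense_compl_zero : @Dense ℝ tau ({(0:ℝ)}ᶜ : Set ℝ) := by
  rw [@dense_iff_inter_open ℝ tau _]
  rintro U hU ⟨x, hx⟩
  rcases hU with h0 | hc
  · exact ⟨x, hx, fun hx0 => h0 (by simpa [Set.mem_singleton_iff.mp hx0] using hx)⟩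
  · by_contra h
    have hU0 : U ⊆ {0} := fun y hy => by
      by_contra hy0
      exact h ⟨y, hy, hy0⟩
    have : (Set.univ : Set ℝ).Countable := by
      have : (Set.univ : Set ℝ) ⊆ {0} ∪ Uᶜ := by
        intro z _
        by_cases hz : z ∈ U
        · exact Or.inl (hU0 hz)
        · exact Or.inr hz
      exact Set.Countable.mono this ((Set.countable_singleton _).union hc)
    exact Cardinal.not_countable_real this

/-- `(ℝ, tau)` is a non-discrete Baire P-space. -/
theorem stmt6 :
    tau ≠ ⊥ ∧ @BaireSpace ℝ tau ∧
      ∀ s : Set ℝ, @IsGδ ℝ tau s → @IsOpen ℝ tau s := by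
  refine ⟨?_, ?_, ?_⟩
  · intro h
    have hs : @IsOpen ℝ tau ({(0:ℝ)} : Set ℝ) := by
      rw [h]; exact @isOpen_discrete ℝ ⊥ (discreteTopology_bot ℝ) _
    rcases hs with h0 | hc
    · exact h0 rfl
    · apply Cardinal.not_countable_real
      have : (Set.univ : Set ℝ) ⊆ {0} ∪ ({(0:ℝ)} : Set ℝ)ᶜ := fun z _ => by
        by_cases hz : z ∈ ({(0:ℝ)} : Set ℝ)
        · exact Or.inl hz
        · exact Or.inr hz
      exact Set.Countable.mono this ((Set.countable_singleton _).union hc)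
  · refine @BaireSpace.mk ℝ tau ?_
    intro f hfo hfd
    have hsub : ({(0:ℝ)}ᶜ : Set ℝ) ⊆ ⋂ n, f n :=
      Set.subset_iInter fun n => tau_zero_compl_subset (hfo n) (hfd n)
    exact @Dense.mono ℝ tau _ _ hsub tau_dense_compl_zero
  · intro s hs
    obtain ⟨T, hTo, hTc, rfl⟩ := hs
    by_cases h0 : (0:ℝ) ∈ ⋂₀ T
    · refine Or.inr ?_
      rw [Set.compl_sInter]
      refine Set.Countable.sUnion (hTc.image _) ?_
      rintro t ⟨u, hu, rfl⟩
      rcases hTo u hu with hu0 | huc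
      · exact absurd (h0 u hu) hu0
      · exact huc
    · exact Or.inl h0
end

section
/- Let X be a T1 space and f, g be nonzero zero divisors in C(X)_F. Then there exists a nonzero h ∈ C(X)_F with h·f = 0 and h·g = 0 if and only if Z(f) ∩ Z(g) ≠ ∅. -/
open SimpleGraph

/-- `f` is a nonzero zero divisor of the ring `C(X)_F`. -/
def ZD (X : Type*) [TopologicalSpace X] (f : X → ℝ) : Prop :=
  CF X f ∧ f ≠ 0 ∧ ∃ g : X → ℝ, CF X g ∧ g ≠ 0 ∧ f * g = 0

/-- The vertex set of the zero divisor graph of `C(X)_F`. -/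
def Vtx (X : Type*) [TopologicalSpace X] := {f : X → ℝ // ZD X f}

/-- The zero divisor graph `Γ(C(X)_F)`: vertices are the nonzero zero divisors,
`f` and `g` adjacent iff `f ≠ g` and `f * g = 0`. -/
def Γ (X : Type*) [TopologicalSpace X] : SimpleGraph (Vtx X) where
  Adj f g := f ≠ g ∧ (f.1 * g.1 = 0)
  symm := ⟨fun f g ⟨h1, h2⟩ => ⟨h1.symm, by rw [mul_comm] at h2; exact h2⟩⟩
  loopless := ⟨fun f ⟨h, _⟩ => h rfl⟩

/-- The zero set of a function. -/
def Z {X : Type*} (f : X → ℝ) : Set X := {x | f x = 0}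

/-- The characteristic function of a point. -/
noncomputable def chi {X : Type*} (x : X) : X → ℝ := Set.indicator {x} (fun _ => 1)

/-- For nonzero zero divisors `f, g` of `C(X)_F`, there is a nonzero `h ∈ C(X)_F` with
`h * f = 0` and `h * g = 0` iff `Z(f) ∩ Z(g) ≠ ∅`. -/
theorem stmt8 {X : Type*} [TopologicalSpace X] [T1Space X]
    (f g : X → ℝ) (hf : ZD X f) (hg : ZD X g) :
    (∃ h : X → ℝ, CF X h ∧ h ≠ 0 ∧ h * f = 0 ∧ h * g = 0) ↔
      (Z f ∩ Z g).Nonempty := by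
  constructor
  · rintro ⟨h, hCF, hne, hhf, hhg⟩
    obtain ⟨x, hx⟩ : ∃ x, h x ≠ 0 := by
      by_contra hc
      push_neg at hc
      exact hne (funext hc)
    refine ⟨x, ?_, ?_⟩
    · have := congrFun hhf x
      simp only [Pi.mul_apply, Pi.zero_apply] at this
      exact Or.resolve_left (mul_eq_zero.mp this) hx
    · have := congrFun hhg x
      simp only [Pi.mul_apply, Pi.zero_apply] at this
      exact Or.resolve_left (mul_eq_zero.mp this) hx
  · rintro ⟨x, hxf, hxg⟩
    refine ⟨chi x, ⟨{x}, Set.finite_singleton x, ?_⟩, ?_, ?_, ?_⟩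
    · apply ContinuousOn.congr continuousOn_const (f := fun _ => (0:ℝ))
      intro y hy
      simp only [chi]
      exact Set.indicator_of_notMem hy _
    · intro hc
      have := congrFun hc x
      simp [chi] at this
    · funext y
      by_cases hy : y = x
      · subst hy
        simp only [Pi.mul_apply, Pi.zero_apply]
        rw [hxf]; ring
      · simp only [Pi.mul_apply, Pi.zero_apply, chi]
        rw [Set.indicator_of_notMem (by simpa using hy) _]; ring
    · funext y
      by_cases hy : y = x
      · subst hy
        simp only [Pi.mul_apply, Pi.zero_apply]
        rw [hxg]; ring
      · simp only [Pi.mul_apply, Pi.zero_apply, chi]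
        rw [Set.indicator_of_notMem (by simpa using hy) _]; ring
end

section
/- Let X be a T1 space and f, g be nonzero zero divisors in C(X)_F with Z(f) ∩ Z(g) = ∅. Then there exist distinct nonzero h₁, h₂ ∈ C(X)_F such that f·h₁ = 0, h₁·h₂ = 0, and h₂·g = 0. -/
open SimpleGraph

/-!
Pick zeros `a` of `f` and `b` of `g`; they are distinct because the zero sets are disjoint.
The characteristic functions `h₁ = χ_a` and `h₂ = χ_b` lie in `C(X)_F` (they are continuous off
a single point), are distinct and nonzero, and `f χ_a = χ_a χ_b = χ_b g = 0`.
-/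

section Chi

variable {X : Type*}

lemma chi_self (x : X) : chi x x = 1 := by
  simp [chi]

lemma chi_apply_of_ne {x y : X} (h : y ≠ x) : chi x y = 0 := by
  simp [chi, h]

lemma chi_ne_zero (x : X) : chi x ≠ 0 := fun h => by
  simpa [chi_self] using congrFun h x

lemma chi_injective : Function.Injective (chi : X → X → ℝ) := by
  intro x y hxy
  by_contra hne
  simpa [chi_self, chi_apply_of_ne hne] using congrFun hxy x

lemma mul_chi_eq_zero {f : X → ℝ} {x : X} (hx : f x = 0) : f * chi x = 0 := by
  funext y
  rcases eq_or_ne y x with rfl | hy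
  · simp [hx]
  · simp [chi_apply_of_ne hy]

lemma chi_mul_chi_of_ne {x y : X} (h : x ≠ y) : chi x * chi y = 0 :=
  mul_chi_eq_zero (chi_apply_of_ne h.symm)

lemma CF_chi [TopologicalSpace X] (x : X) : CF X (chi x) :=
  ⟨{x}, Set.finite_singleton x, continuousOn_const.congr fun _ hy =>
    chi_apply_of_ne (Set.mem_compl_singleton_iff.mp hy)⟩

end Chi

lemma ZD.exists_apply_eq_zero {X : Type*} [TopologicalSpace X] {f : X → ℝ} (hf : ZD X f) :
    ∃ x, f x = 0 := by
  obtain ⟨-, -, g, -, hg, hfg⟩ := hf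
  obtain ⟨x, hx⟩ := Function.ne_iff.mp hg
  exact ⟨x, (mul_eq_zero.mp (congrFun hfg x)).resolve_right hx⟩

theorem stmt9_general {X : Type*} [TopologicalSpace X]
    (f g : X → ℝ) (hf : ZD X f) (hg : ZD X g) (hdisj : Z f ∩ Z g = ∅) :
    ∃ h₁ h₂ : X → ℝ, CF X h₁ ∧ CF X h₂ ∧ h₁ ≠ 0 ∧ h₂ ≠ 0 ∧ h₁ ≠ h₂ ∧
      f * h₁ = 0 ∧ h₁ * h₂ = 0 ∧ h₂ * g = 0 := by
  obtain ⟨a, ha⟩ := hf.exists_apply_eq_zero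
  obtain ⟨b, hb⟩ := hg.exists_apply_eq_zero
  have hab : a ≠ b := by
    rintro rfl
    exact hdisj.subset ⟨ha, hb⟩
  refine ⟨chi a, chi b, CF_chi a, CF_chi b, chi_ne_zero a, chi_ne_zero b,
    chi_injective.ne hab, mul_chi_eq_zero ha, chi_mul_chi_of_ne hab, ?_⟩
  rw [mul_comm]
  exact mul_chi_eq_zero hb

/-- For nonzero zero divisors `f, g` of `C(X)_F` with disjoint zero sets, there exist
distinct nonzero `h₁, h₂ ∈ C(X)_F` with `f * h₁ = 0`, `h₁ * h₂ = 0` and `h₂ * g = 0`. -/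
theorem stmt9 {X : Type*} [TopologicalSpace X] [T1Space X]
    (f g : X → ℝ) (hf : ZD X f) (hg : ZD X g) (hdisj : Z f ∩ Z g = ∅) :
    ∃ h₁ h₂ : X → ℝ, CF X h₁ ∧ CF X h₂ ∧ h₁ ≠ 0 ∧ h₂ ≠ 0 ∧ h₁ ≠ h₂ ∧
      f * h₁ = 0 ∧ h₁ * h₂ = 0 ∧ h₂ * g = 0 :=
  stmt9_general f g hf hg hdisj
end

section
/- Let X be a T1 space and f, g be distinct nonzero zero divisors in C(X)_F. Then the distance d(f,g) in the zero divisor graph Γ(C(X)_F) equals 2 if and only if Z(f) ∪ Z(g) ≠ X and Z(f) ∩ Z(g) ≠ ∅. -/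
open SimpleGraph

lemma mul_eq_zero_iff_union {X : Type*} (f g : X → ℝ) :
    f * g = 0 ↔ Z f ∪ Z g = Set.univ := by
  constructor
  · intro h
    ext x
    have := congrFun h x
    simp only [Pi.mul_apply, Pi.zero_apply, mul_eq_zero] at this
    simpa [Z, Set.mem_union] using this
  · intro h
    funext x
    have : x ∈ Z f ∪ Z g := h ▸ Set.mem_univ x
    simp only [Z, Set.mem_union, Set.mem_setOf_eq] at this
    simp only [Pi.mul_apply, Pi.zero_apply, mul_eq_zero]
    exact this

lemma chi_ZD {X : Type*} [TopologicalSpace X] (x : X) (f : X → ℝ)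
    (hf : CF X f) (hf0 : f ≠ 0) (hfx : f x = 0) : ZD X (chi x) := by
  refine ⟨⟨{x}, Set.finite_singleton x, ?_⟩, ?_, f, hf, hf0, ?_⟩
  · apply (continuousOn_const (c := (0:ℝ))).congr
    intro y hy
    exact Set.indicator_of_notMem (by simpa using hy) _
  · intro h
    have := congrFun h x
    simp [chi] at this
  · funext y
    by_cases hy : y = x
    · subst hy; simp [chi, hfx]
    · simp [chi, Set.indicator_apply, hy]

/-- For distinct vertices `f, g` of `Γ(C(X)_F)`, `d(f,g) = 2` iff
`Z(f) ∪ Z(g) ≠ X` and `Z(f) ∩ Z(g) ≠ ∅`. -/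
theorem stmt10 {X : Type*} [TopologicalSpace X] [T1Space X]
    (f g : Vtx X) (hfg : f ≠ g) :
    (Γ X).dist f g = 2 ↔
      (Z f.1 ∪ Z g.1 ≠ Set.univ ∧ (Z f.1 ∩ Z g.1).Nonempty) := by
  constructor
  · intro hd
    obtain ⟨p, hp⟩ := exists_walk_of_dist_ne_zero (by omega : (Γ X).dist f g ≠ 0)
    rw [hd] at hp
    constructor
    · intro hU
      have hadj : (Γ X).Adj f g := ⟨hfg, (mul_eq_zero_iff_union _ _).2 hU⟩
      have : (Γ X).dist f g = 1 := dist_eq_one_iff_adj.2 hadj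
      omega
    · -- extract middle vertex
      match p, hp with
      | SimpleGraph.Walk.cons' _ h _ h1 (SimpleGraph.Walk.cons h2 SimpleGraph.Walk.nil), _ =>
        obtain ⟨_, hfh⟩ := h1
        obtain ⟨_, hhg⟩ := h2
        obtain ⟨x, hx⟩ := Function.ne_iff.1 h.2.2.1
        refine ⟨x, ?_, ?_⟩
        · have := congrFun hfh x
          simp only [Pi.mul_apply, Pi.zero_apply, mul_eq_zero] at this
          exact this.resolve_right hx
        · have := congrFun hhg x
          simp only [Pi.mul_apply, Pi.zero_apply, mul_eq_zero] at this
          exact this.resolve_left hx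
  · rintro ⟨hU, x, hfx, hgx⟩
    have hfx : f.1 x = 0 := hfx
    have hgx : g.1 x = 0 := hgx
    have hZD : ZD X (chi x) := chi_ZD x f.1 f.2.1 f.2.2.1 hfx
    set h : Vtx X := ⟨chi x, hZD⟩ with hh
    have hchix : chi x x = 1 := by simp [chi]
    have hfh : (Γ X).Adj f h := by
      refine ⟨?_, ?_⟩
      · intro he
        have := congrArg (fun v : Vtx X => v.1 x) he
        simp only [hh] at this
        rw [hfx, hchix] at this; norm_num at this
      · funext y
        by_cases hy : y = x
        · subst hy; simp [hfx]
        · simp [hh, chi, Set.indicator_apply, hy]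
    have hhg : (Γ X).Adj h g := by
      refine ⟨?_, ?_⟩
      · intro he
        have := congrArg (fun v : Vtx X => v.1 x) he
        simp only [hh] at this
        rw [hgx, hchix] at this; norm_num at this
      · funext y
        by_cases hy : y = x
        · subst hy; simp [hgx]
        · simp [hh, chi, Set.indicator_apply, hy]
    have hle : (Γ X).dist f g ≤ 2 := by
      have := SimpleGraph.dist_le (hfh.toWalk.append hhg.toWalk)
      simpa using this
    have hne1 : (Γ X).dist f g ≠ 1 := by
      intro h1
      obtain ⟨-, hmul⟩ := dist_eq_one_iff_adj.1 h1
      exact hU ((mul_eq_zero_iff_union _ _).1 hmul)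
    have hne0 : (Γ X).dist f g ≠ 0 := by
      rw [dist_ne_zero_iff_ne_and_reachable]
      exact ⟨hfg, ⟨hfh.toWalk.append hhg.toWalk⟩⟩
    omega
end

section
/- Let X be a T1 space and f a nonzero zero divisor in C(X)_F such that X \ Z(f) is a singleton. Then for every other vertex g of Γ(C(X)_F), d(f,g) ≤ 2, and if X has at least two points this bound 2 is attained, i.e., the eccentricity e(f) = 2. -/
open SimpleGraph

lemma CF_of_support_finite {X : Type*} [TopologicalSpace X] {f : X → ℝ}
    (h : {x | f x ≠ 0}.Finite) : CF X f := by
  refine ⟨{x | f x ≠ 0}, h, (continuousOn_const (c := (0:ℝ))).congr ?_⟩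
  intro x hx
  simpa using not_not.mp hx

lemma ind_mul_eq_zero {X : Type*} {x y : X} (c d : ℝ) (hxy : x ≠ y) :
    (Set.indicator {x} (fun _ => c) : X → ℝ) * Set.indicator {y} (fun _ => d) = 0 := by
  funext z
  by_cases hz : z = x
  · subst hz
    simp [Set.indicator_of_notMem, hxy, Set.mem_singleton_iff]
  · simp [Set.indicator_of_notMem, hz, Set.mem_singleton_iff]

/-- If `f` is a vertex of `Γ(C(X)_F)` with `X \\ Z(f)` a singleton, then every other
vertex is within distance 2 of `f`, and (if `X` has at least two points) this bound is
attained, i.e. `e(f) = 2`. -/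
theorem stmt15 {X : Type*} [TopologicalSpace X] [T1Space X]
    (f : Vtx X) (x₀ : X) (hsing : {x : X | f.1 x ≠ 0} = {x₀}) :
    (∀ g : Vtx X, g ≠ f → (Γ X).Reachable f g ∧ (Γ X).dist f g ≤ 2) ∧
      ((∃ x y : X, x ≠ y) → ∃ g : Vtx X, g ≠ f ∧ (Γ X).dist f g = 2) := by
  have hx₀ : f.1 x₀ ≠ 0 := by
    have : x₀ ∈ {x : X | f.1 x ≠ 0} := hsing ▸ rfl
    exact this
  have hoff : ∀ x : X, x ≠ x₀ → f.1 x = 0 := by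
    intro x hx
    by_contra h
    have hmem : x ∈ {x : X | f.1 x ≠ 0} := h
    rw [hsing] at hmem
    exact hx hmem
  -- main part
  have main : ∀ g : Vtx X, g ≠ f → (Γ X).Reachable f g ∧ (Γ X).dist f g ≤ 2 := by
    intro g hg
    by_cases hadj : f.1 * g.1 = 0
    · have adj : (Γ X).Adj f g := ⟨hg.symm, hadj⟩
      exact ⟨adj.reachable, le_trans (SimpleGraph.dist_le adj.toWalk) (by norm_num)⟩
    · -- g x₀ ≠ 0
      have hgx₀ : g.1 x₀ ≠ 0 := by
        intro h0
        apply hadj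
        funext x
        by_cases hx : x = x₀
        · subst hx; simp [h0]
        · simp [hoff x hx]
      obtain ⟨h, hCF, hne0, hgh⟩ := g.2.2.2
      have hhx₀ : h x₀ = 0 := by
        have := congrFun hgh x₀
        simp only [Pi.mul_apply, Pi.zero_apply] at this
        exact (mul_eq_zero.mp this).resolve_left hgx₀
      have hfh : f.1 * h = 0 := by
        funext x
        by_cases hx : x = x₀
        · subst hx; simp [hhx₀]
        · simp [hoff x hx]
      have hZD : ZD X h := ⟨hCF, hne0, g.1, g.2.1, g.2.2.1, by rw [mul_comm]; exact hgh⟩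
      set hv : Vtx X := ⟨h, hZD⟩
      have adj1 : (Γ X).Adj f hv := by
        refine ⟨fun e => hx₀ ?_, hfh⟩
        have := congrArg (fun v : Vtx X => v.1 x₀) e
        simpa [hv, hhx₀] using this
      have adj2 : (Γ X).Adj hv g := by
        refine ⟨fun e => hgx₀ ?_, by rw [mul_comm]; exact hgh⟩
        have := congrArg (fun v : Vtx X => v.1 x₀) e
        simpa [hv, hhx₀] using this.symm
      let w : (Γ X).Walk f g := SimpleGraph.Walk.cons adj1 (SimpleGraph.Walk.cons adj2 SimpleGraph.Walk.nil)
      exact ⟨⟨w⟩, by simpa [w] using SimpleGraph.dist_le w⟩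
  refine ⟨main, fun ⟨x, y, hxy⟩ => ?_⟩
  -- get a point distinct from x₀
  obtain ⟨y₀, hy₀⟩ : ∃ y₀ : X, y₀ ≠ x₀ := by
    by_cases hx : x = x₀
    · exact ⟨y, by rw [← hx]; exact fun e => hxy e.symm⟩
    · exact ⟨x, hx⟩
  set c : ℝ := if f.1 x₀ = 1 then 2 else 1 with hc
  have hc0 : c ≠ 0 := by rw [hc]; split <;> norm_num
  have hcf : c ≠ f.1 x₀ := by
    rw [hc]; split
    · rename_i h; rw [h]; norm_num
    · rename_i h; exact fun e => h e.symm
  set gfun : X → ℝ := Set.indicator {x₀} (fun _ => c) with hgfun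
  have hgx₀ : gfun x₀ = c := by simp [hgfun]
  have hZDg : ZD X gfun := by
    refine ⟨CF_of_support_finite ?_, ?_, chi y₀, CF_of_support_finite ?_, ?_, ?_⟩
    · exact (Set.finite_singleton x₀).subset (fun z hz => by
        by_contra hzx; exact hz (by simp [hgfun, Set.indicator_of_notMem, hzx]))
    · intro e; exact hc0 (by rw [← hgx₀, e]; rfl)
    · exact (Set.finite_singleton y₀).subset (fun z hz => by
        by_contra hzx; exact hz (by simp [chi, Set.indicator_of_notMem, hzx]))
    · intro e
      have := congrFun e y₀
      simp [chi] at this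
    · exact ind_mul_eq_zero c 1 (fun e => hy₀ e.symm)
  set g : Vtx X := ⟨gfun, hZDg⟩
  have hgf : g ≠ f := by
    intro e
    apply hcf
    have := congrArg (fun v : Vtx X => v.1 x₀) e
    simpa [g, hgx₀] using this
  have hnadj : ¬ (Γ X).Adj f g := by
    rintro ⟨-, h0⟩
    have := congrFun h0 x₀
    simp only [Pi.mul_apply, Pi.zero_apply] at this
    rcases mul_eq_zero.mp this with h | h
    · exact hx₀ h
    · exact hc0 (hgx₀ ▸ h)
  obtain ⟨hr, hle⟩ := main g hgf
  refine ⟨g, hgf, ?_⟩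
  have hpos : 0 < (Γ X).dist f g := hr.pos_dist_of_ne (fun e => hgf e.symm)
  have h1 : (Γ X).dist f g ≠ 1 := fun e => hnadj (SimpleGraph.dist_eq_one_iff_adj.mp e)
  omega
end
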